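/- arXiv:2007.08202 — 3 statements merged into one kernel-verified Lean document; each statement's English description precedes it below -/
import Mathlib

section
/- Let ζ : S' × A' → {0,1} be a filter with ζ(s, a_abs) = 0 and ζ(s_abs, a) = 0, and define the projection Ξ mapping a policy π to Ξ(π) with Ξ(π)(a|s) = ζ(s,a)π(a|s) for a ∈ A and Ξ(π)(a_abs|s) = Σ_{a'} π(a'|s)(1 − ζ(s,a')). Then in the absorbing-augmented MDP M', v^π ≥ v^{Ξ(π)}, with equality if ζ(s,a) = 1 for every state-action pair (s,a) reachable under π. -/
/-! Under `Ξ(π)` a real action `a` is taken with probability `ζ(s,a) π(a|s) ≤ π(a|s)`, and the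
diverted mass goes to `a_abs`, which leads to `s_abs` and earns nothing from then on. Real states
are entered only from real state-action pairs, so induction on the horizon shows that on real
states the step-`h` state distribution of `Ξ(π)` is dominated by that of `π`. Rewards are
nonnegative and vanish off the real pairs, so the discounted returns compare term by term. If
`ζ = 1` wherever `π` goes, the two state distributions agree on real states by the same
induction, and so do the returns. -/

open scoped BigOperators

/-- A finite Markov decision process with transition probabilities `P`,
reward function `r`, discount factor `γ`, and initial distribution `ρ`. -/
structure MDP (S A : Type) [Fintype S] [Fintype A] where
  P : S → A → S → ℝ
  r : S → A → ℝ
  γ : ℝ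
  ρ : S → ℝ

variable {S A : Type} [Fintype S] [Fintype A]

/-- `P` has nonnegative rows summing to one, `ρ` is a distribution, `0 ≤ γ < 1`. -/
def IsValidMDP (M : MDP S A) : Prop :=
  (∀ s a s', 0 ≤ M.P s a s') ∧ (∀ s a, ∑ s' : S, M.P s a s' = 1) ∧
  (∀ s, 0 ≤ M.ρ s) ∧ (∑ s : S, M.ρ s = 1) ∧ 0 ≤ M.γ ∧ M.γ < 1

/-- A (stationary, stochastic) policy. -/
def IsPolicy (π : S → A → ℝ) : Prop :=
  (∀ s a, 0 ≤ π s a) ∧ ∀ s, ∑ a : A, π s a = 1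

/-- Marginal state distribution at step `h` under policy `π`. -/
noncomputable def stateDist (M : MDP S A) (π : S → A → ℝ) : ℕ → S → ℝ
  | 0 => M.ρ
  | h + 1 => fun s' => ∑ s : S, ∑ a : A, stateDist M π h s * π s a * M.P s a s'

/-- Expected discounted return of `π` from the initial distribution. -/
noncomputable def value (M : MDP S A) (π : S → A → ℝ) : ℝ :=
  ∑' h : ℕ, M.γ ^ h * ∑ s : S, ∑ a : A, stateDist M π h s * π s a * M.r s a

/-- State-action distribution at step `h` under `π`, starting from `init`. -/
noncomputable def saDist (M : MDP S A) (π : S → A → ℝ) (init : S × A → ℝ) :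
    ℕ → S × A → ℝ
  | 0 => init
  | h + 1 => fun p => ∑ q : S × A, saDist M π init h q * M.P q.1 q.2 p.1 * π p.1 p.2

open Classical in
/-- Action-value function `Q^π(s,a)`: discounted sum of expected rewards when
starting from the state-action pair `(s, a)` and following `π` afterwards. -/
noncomputable def Qf (M : MDP S A) (π : S → A → ℝ) (s : S) (a : A) : ℝ :=
  ∑' h : ℕ, M.γ ^ h * ∑ p : S × A,
    saDist M π (fun q => if q = (s, a) then 1 else 0) h p * M.r p.1 p.2

/-- State-value function `V^π(s)`. -/
noncomputable def Vf (M : MDP S A) (π : S → A → ℝ) (s : S) : ℝ :=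
  ∑ a : A, π s a * Qf M π s a

/-- The absorbing-augmented MDP `M'`: the extra state `none = s_abs` and extra
action `none = a_abs` give zero reward and lead deterministically to `s_abs`. -/
noncomputable def absorb (M : MDP S A) : MDP (Option S) (Option A) where
  P := fun s a s' =>
    match s, a with
    | some s0, some a0 => (match s' with | some t => M.P s0 a0 t | none => 0)
    | _, _ => (match s' with | none => 1 | some _ => 0)
  r := fun s a =>
    match s, a with
    | some s0, some a0 => M.r s0 a0
    | _, _ => 0
  γ := M.γ
  ρ := fun s => match s with | some s0 => M.ρ s0 | none => 0

/-- The ζ-constrained policy projection `Ξ`: it keeps the probability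
`ζ(s,a)·π(a|s)` on supported actions `a ∈ A` and sends all remaining mass
to the absorbing action `a_abs = none`. -/
noncomputable def proj (ζ : Option S → Option A → ℝ) (π : Option S → Option A → ℝ) :
    Option S → Option A → ℝ :=
  fun s a =>
    match a with
    | some _ => ζ s a * π s a
    | none => ∑ a' : Option A, π s a' * (1 - ζ s a')

noncomputable def expectedReward (M : MDP S A) (π : S → A → ℝ) (h : ℕ) : ℝ :=
  ∑ s : S, ∑ a : A, stateDist M π h s * π s a * M.r s a

theorem value_eq_tsum_expectedReward (M : MDP S A) (π : S → A → ℝ) :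
    value M π = ∑' h : ℕ, M.γ ^ h * expectedReward M π h :=
  rfl

section General

variable {M : MDP S A} {π : S → A → ℝ}

theorem stateDist_nonneg (hP : ∀ s a s', 0 ≤ M.P s a s') (hρ : ∀ s, 0 ≤ M.ρ s)
    (hπ : ∀ s a, 0 ≤ π s a) (h : ℕ) (s : S) : 0 ≤ stateDist M π h s := by
  induction h generalizing s with
  | zero => exact hρ s
  | succ h ih =>
    exact Finset.sum_nonneg fun s _ => Finset.sum_nonneg fun a _ =>
      mul_nonneg (mul_nonneg (ih s) (hπ s a)) (hP s a _)

theorem sum_stateDist (hP : ∀ s a, ∑ s' : S, M.P s a s' = 1) (hρ : ∑ s : S, M.ρ s = 1)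
    (hπ : ∀ s, ∑ a : A, π s a = 1) (h : ℕ) : ∑ s : S, stateDist M π h s = 1 := by
  induction h with
  | zero => exact hρ
  | succ h ih =>
    calc ∑ s' : S, ∑ s : S, ∑ a : A, stateDist M π h s * π s a * M.P s a s'
        = ∑ s : S, stateDist M π h s * ∑ a : A, π s a * ∑ s' : S, M.P s a s' := by
          simp only [Finset.mul_sum, mul_assoc]
          rw [Finset.sum_comm]
          exact Finset.sum_congr rfl fun s _ => Finset.sum_comm
      _ = 1 := by simp only [hP, mul_one, hπ, ih]

theorem abs_expectedReward_le (hM : IsValidMDP M) (hπ : IsPolicy π) (h : ℕ) :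
    |expectedReward M π h| ≤ ∑ s : S, ∑ a : A, |M.r s a| := by
  obtain ⟨hP, hProw, hρ, hρ1, -, -⟩ := hM
  have hD := stateDist_nonneg hP hρ hπ.1 h
  refine (Finset.abs_sum_le_sum_abs _ _).trans <| Finset.sum_le_sum fun s _ =>
    (Finset.abs_sum_le_sum_abs _ _).trans <| Finset.sum_le_sum fun a _ => ?_
  have hDle : stateDist M π h s ≤ 1 :=
    sum_stateDist hProw hρ1 hπ.2 h ▸ Finset.single_le_sum (fun s _ => hD s) (Finset.mem_univ s)
  have hπle : π s a ≤ 1 :=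
    hπ.2 s ▸ Finset.single_le_sum (fun a _ => hπ.1 s a) (Finset.mem_univ a)
  rw [abs_mul, abs_of_nonneg (mul_nonneg (hD s) (hπ.1 s a))]
  exact mul_le_of_le_one_left (abs_nonneg _) (mul_le_one₀ hDle (hπ.1 s a) hπle)

theorem summable_discounted_expectedReward (hM : IsValidMDP M) (hπ : IsPolicy π) :
    Summable fun h : ℕ => M.γ ^ h * expectedReward M π h := by
  refine Summable.of_norm_bounded
    ((summable_geometric_of_lt_one hM.2.2.2.2.1 hM.2.2.2.2.2).mul_right
      (∑ s : S, ∑ a : A, |M.r s a|)) fun h => ?_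
  rw [Real.norm_eq_abs, abs_mul, abs_pow, abs_of_nonneg hM.2.2.2.2.1]
  exact mul_le_mul_of_nonneg_left (abs_expectedReward_le hM hπ h)
    (pow_nonneg hM.2.2.2.2.1 h)

end General

section Absorb

variable {M : MDP S A}

theorem isValidMDP_absorb (hM : IsValidMDP M) : IsValidMDP (absorb M) := by
  obtain ⟨hP, hProw, hρ, hρ1, hγ0, hγ1⟩ := hM
  refine ⟨fun s a s' => ?_, fun s a => ?_, fun s => ?_, ?_, hγ0, hγ1⟩
  · rcases s with _ | s <;> rcases a with _ | a <;> rcases s' with _ | s' <;>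
      simp [absorb, hP]
  · rcases s with _ | s <;> rcases a with _ | a <;> simp [absorb, Fintype.sum_option, hProw]
  · rcases s with _ | s <;> simp [absorb, hρ]
  · simp [absorb, Fintype.sum_option, hρ1]

theorem stateDist_absorb_succ_some (π : Option S → Option A → ℝ) (h : ℕ) (t : S) :
    stateDist (absorb M) π (h + 1) (some t) =
      ∑ s : S, ∑ a : A, stateDist (absorb M) π h (some s) * π (some s) (some a) * M.P s a t := by
  simp [stateDist, absorb, Fintype.sum_option]

theorem expectedReward_absorb (π : Option S → Option A → ℝ) (h : ℕ) :
    expectedReward (absorb M) π h =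
      ∑ s : S, ∑ a : A, stateDist (absorb M) π h (some s) * π (some s) (some a) * M.r s a := by
  simp [expectedReward, absorb, Fintype.sum_option]

end Absorb

section Comparison

variable {M : MDP S A} {σ π : Option S → Option A → ℝ}

theorem stateDist_absorb_some_le (hM : IsValidMDP M) (hπ : ∀ s a, 0 ≤ π s a)
    (hσ : ∀ s a, 0 ≤ σ (some s) (some a)) (hσπ : ∀ s a, σ (some s) (some a) ≤ π (some s) (some a))
    (h : ℕ) (s : S) : stateDist (absorb M) σ h (some s) ≤ stateDist (absorb M) π h (some s) := by
  have hM' := isValidMDP_absorb hM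
  induction h generalizing s with
  | zero => exact le_rfl
  | succ h ih =>
    rw [stateDist_absorb_succ_some, stateDist_absorb_succ_some]
    refine Finset.sum_le_sum fun s _ => Finset.sum_le_sum fun a _ => ?_
    have hD := stateDist_nonneg hM'.1 hM'.2.2.1 hπ h (some s)
    exact mul_le_mul_of_nonneg_right (mul_le_mul (ih s) (hσπ s a) (hσ s a) hD) (hM.1 s a _)

theorem expectedReward_absorb_le (hM : IsValidMDP M) (hr : ∀ s a, 0 ≤ M.r s a)
    (hπ : ∀ s a, 0 ≤ π s a) (hσ : ∀ s a, 0 ≤ σ (some s) (some a))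
    (hσπ : ∀ s a, σ (some s) (some a) ≤ π (some s) (some a)) (h : ℕ) :
    expectedReward (absorb M) σ h ≤ expectedReward (absorb M) π h := by
  have hM' := isValidMDP_absorb hM
  rw [expectedReward_absorb, expectedReward_absorb]
  refine Finset.sum_le_sum fun s _ => Finset.sum_le_sum fun a _ => ?_
  have hD := stateDist_nonneg hM'.1 hM'.2.2.1 hπ h (some s)
  exact mul_le_mul_of_nonneg_right
    (mul_le_mul (stateDist_absorb_some_le hM hπ hσ hσπ h s) (hσπ s a) (hσ s a) hD) (hr s a)

theorem expectedReward_absorb_nonneg (hM : IsValidMDP M) (hr : ∀ s a, 0 ≤ M.r s a)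
    (hπ : ∀ s a, 0 ≤ π s a) (h : ℕ) : 0 ≤ expectedReward (absorb M) π h := by
  have hM' := isValidMDP_absorb hM
  rw [expectedReward_absorb]
  exact Finset.sum_nonneg fun s _ => Finset.sum_nonneg fun a _ =>
    mul_nonneg (mul_nonneg (stateDist_nonneg hM'.1 hM'.2.2.1 hπ h _) (hπ _ _)) (hr s a)

theorem stateDist_absorb_some_eq (hσπ : ∀ h s a,
      stateDist (absorb M) π h (some s) * σ (some s) (some a) =
        stateDist (absorb M) π h (some s) * π (some s) (some a))
    (h : ℕ) (s : S) : stateDist (absorb M) σ h (some s) = stateDist (absorb M) π h (some s) := by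
  induction h generalizing s with
  | zero => rfl
  | succ h ih => simp only [stateDist_absorb_succ_some, ih, hσπ]

theorem expectedReward_absorb_eq (hσπ : ∀ h s a,
      stateDist (absorb M) π h (some s) * σ (some s) (some a) =
        stateDist (absorb M) π h (some s) * π (some s) (some a))
    (h : ℕ) : expectedReward (absorb M) σ h = expectedReward (absorb M) π h := by
  simp only [expectedReward_absorb, stateDist_absorb_some_eq hσπ, hσπ]

end Comparison

section Projection

variable {T : Type} {ζ π : Option T → Option A → ℝ}

theorem proj_nonneg (hζ : ∀ s a, ζ s a = 0 ∨ ζ s a = 1) (hπ : ∀ s a, 0 ≤ π s a)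
    (s : Option T) (a : Option A) : 0 ≤ proj ζ π s a := by
  have hζ1 : ∀ a, 0 ≤ 1 - ζ s a := fun a => by rcases hζ s a with h | h <;> simp [h]
  rcases a with _ | a
  · exact Finset.sum_nonneg fun a _ => mul_nonneg (hπ s a) (hζ1 a)
  · rcases hζ s (some a) with h | h <;> simp [proj, h, hπ]

theorem proj_some_le (hζ : ∀ s a, ζ s a = 0 ∨ ζ s a = 1) (hπ : ∀ s a, 0 ≤ π s a)
    (s : Option T) (a : A) : proj ζ π s (some a) ≤ π s (some a) := by
  rcases hζ s (some a) with h | h <;> simp [proj, h, hπ]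

theorem mul_proj_some_eq {d : ℝ} {s : Option T} {a : A} (hζ : ζ s (some a) = 0 ∨ ζ s (some a) = 1)
    (hdπ : 0 ≤ d * π s (some a)) (hreach : 0 < d * π s (some a) → ζ s (some a) = 1) :
    d * proj ζ π s (some a) = d * π s (some a) := by
  change d * (ζ s (some a) * π s (some a)) = _
  rcases hdπ.lt_or_eq with hpos | hzero
  · rw [hreach hpos, one_mul]
  · rcases hζ with h | h
    · rw [h, zero_mul, mul_zero, hzero]
    · rw [h, one_mul]

end Projection

theorem value_proj_le_value_general (M : MDP S A) (hM : IsValidMDP M)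
    (hr : ∀ s a, 0 ≤ M.r s a)
    (ζ : Option S → Option A → ℝ)
    (hζ01 : ∀ s a, ζ s a = 0 ∨ ζ s a = 1)
    (π : Option S → Option A → ℝ) (hπ : IsPolicy π) :
    value (absorb M) (proj ζ π) ≤ value (absorb M) π ∧
      ((∀ h s a, 0 < stateDist (absorb M) π h s * π s a → ζ s a = 1) →
        value (absorb M) π = value (absorb M) (proj ζ π)) := by
  have hσ := proj_nonneg hζ01 hπ.1
  have hstep (h : ℕ) : expectedReward (absorb M) (proj ζ π) h ≤ expectedReward (absorb M) π h :=
    expectedReward_absorb_le hM hr hπ.1 (fun _ _ => hσ _ _) (fun _ _ => proj_some_le hζ01 hπ.1 _ _) h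
  have hγ (h : ℕ) : 0 ≤ (absorb M).γ ^ h := pow_nonneg hM.2.2.2.2.1 h
  have hsumπ := summable_discounted_expectedReward (isValidMDP_absorb hM) hπ
  have hsumσ : Summable fun h => (absorb M).γ ^ h * expectedReward (absorb M) (proj ζ π) h :=
    hsumπ.of_nonneg_of_le (fun h => mul_nonneg (hγ h) (expectedReward_absorb_nonneg hM hr hσ h))
      (fun h => mul_le_mul_of_nonneg_left (hstep h) (hγ h))
  refine ⟨hsumσ.tsum_le_tsum (fun h => mul_le_mul_of_nonneg_left (hstep h) (hγ h)) hsumπ,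
    fun hreach => ?_⟩
  have hD := stateDist_nonneg (isValidMDP_absorb hM).1 (isValidMDP_absorb hM).2.2.1 hπ.1
  have hagree (h : ℕ) (s : S) (a : A) := mul_proj_some_eq (hζ01 _ _)
    (mul_nonneg (hD h (some s)) (hπ.1 _ _)) (hreach h (some s) (some a))
  simp only [value_eq_tsum_expectedReward, expectedReward_absorb_eq hagree]

/-- In the absorbing-augmented MDP `M'`, projecting a policy
with `Ξ` can only decrease its value, with equality when `ζ = 1` on every
state-action pair reachable under `π`. -/
theorem value_proj_le_value (M : MDP S A) (hM : IsValidMDP M)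
    (hr : ∀ s a, 0 ≤ M.r s a)
    (ζ : Option S → Option A → ℝ)
    (hζ01 : ∀ s a, ζ s a = 0 ∨ ζ s a = 1)
    (hζa : ∀ s, ζ s none = 0) (hζs : ∀ a, ζ none a = 0)
    (π : Option S → Option A → ℝ) (hπ : IsPolicy π) :
    value (absorb M) (proj ζ π) ≤ value (absorb M) π ∧
      ((∀ h s a, 0 < stateDist (absorb M) π h s * π s a → ζ s a = 1) →
        value (absorb M) π = value (absorb M) (proj ζ π)) :=
  value_proj_le_value_general M hM hr ζ hζ01 π hπ
end

section
/- Performance difference lemma: for any two policies π and π' in an MDP with discount γ ∈ [0,1), v^{π'} − v^{π} = Σ_{h≥0} γ^h E_{s∼η_h^{π}}[ V^{π'}(s) − Σ_a π(a|s) Q^{π'}(s,a) ]. -/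
open scoped BigOperators

variable {S A : Type} [Fintype S] [Fintype A]

/-!
For any `V : S → ℝ`, writing `η_h` for the state distribution of `π` at step `h`, the sum
`∑ γ^h E_{η_h}[V(s) − ∑_a π(a|s) (r(s,a) + γ ∑_{s'} P(s'|s,a) V(s'))]` telescopes to
`E_ρ V − v^π`, because `η_{h+1}` is `η_h` pushed through `π` and `P`. Taking `V = V^{π'}`, the
Bellman equation `Q^{π'}(s,a) = r(s,a) + γ ∑_{s'} P(s'|s,a) V^{π'}(s')` makes the summand the one
in the theorem; for `π = π'` the summand vanishes, which gives `v^{π'} = E_ρ V^{π'}`.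
-/

open Finset Matrix

lemma summable_pow_mul_of_abs_le {γ C : ℝ} {g : ℕ → ℝ} (hγ0 : 0 ≤ γ) (hγ1 : γ < 1)
    (hg : ∀ h, |g h| ≤ C) : Summable fun h => γ ^ h * g h := by
  refine Summable.of_norm_bounded ((summable_geometric_of_lt_one hγ0 hγ1).mul_left C) fun h => ?_
  rw [Real.norm_eq_abs, abs_mul, abs_pow, abs_of_nonneg hγ0, mul_comm]
  exact mul_le_mul_of_nonneg_right (hg h) (pow_nonneg hγ0 h)

lemma Summable.hasSum_sub_succ {G : Type*} [AddCommGroup G] [TopologicalSpace G]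
    [IsTopologicalAddGroup G] [T2Space G] {f : ℕ → G} (hf : Summable f) :
    HasSum (fun n => f n - f (n + 1)) (f 0) := by
  have := hf.hasSum.sub ((summable_nat_add_iff 1).mpr hf).hasSum
  rwa [hf.tsum_eq_zero_add, add_sub_cancel_right] at this

section Stochastic

variable {ι : Type*} [Fintype ι]

lemma abs_sum_mul_le_of_sum_eq_one {μ f : ι → ℝ} {C : ℝ} (hμ0 : ∀ i, 0 ≤ μ i)
    (hμ1 : ∑ i, μ i = 1) (hf : ∀ i, |f i| ≤ C) : |∑ i, μ i * f i| ≤ C :=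
  calc |∑ i, μ i * f i| ≤ ∑ i, μ i * |f i| := by
        refine (abs_sum_le_sum_abs _ _).trans_eq (sum_congr rfl fun i _ => ?_)
        rw [abs_mul, abs_of_nonneg (hμ0 i)]
    _ ≤ ∑ i, μ i * C := sum_le_sum fun i _ => mul_le_mul_of_nonneg_left (hf i) (hμ0 i)
    _ = C := by rw [← sum_mul, hμ1, one_mul]

lemma Matrix.abs_mulVec_le_of_mem_rowStochastic [DecidableEq ι] {T : Matrix ι ι ℝ}
    (hT : T ∈ rowStochastic ℝ ι) (v : ι → ℝ) (i : ι) : |(T *ᵥ v) i| ≤ ‖v‖ :=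
  abs_sum_mul_le_of_sum_eq_one (fun _ => nonneg_of_mem_rowStochastic hT)
    (sum_row_of_mem_rowStochastic hT i) (fun j => norm_le_pi_norm v j)

lemma Matrix.tsum_pow_mul_pow_mulVec [DecidableEq ι] {T : Matrix ι ι ℝ}
    (hT : T ∈ rowStochastic ℝ ι) {γ : ℝ} (hγ0 : 0 ≤ γ) (hγ1 : γ < 1) (v : ι → ℝ) (i : ι) :
    ∑' h : ℕ, γ ^ h * (T ^ h *ᵥ v) i =
      v i + γ * (T *ᵥ fun j => ∑' h : ℕ, γ ^ h * (T ^ h *ᵥ v) j) i := by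
  have hsum (j : ι) : Summable fun h : ℕ => γ ^ h * (T ^ h *ᵥ v) j :=
    summable_pow_mul_of_abs_le hγ0 hγ1 fun h =>
      abs_mulVec_le_of_mem_rowStochastic (pow_mem hT h) v j
  have hsucc (h : ℕ) : γ ^ (h + 1) * (T ^ (h + 1) *ᵥ v) i =
      ∑ j, γ * (T i j * (γ ^ h * (T ^ h *ᵥ v) j)) := by
    rw [pow_succ' T, ← mulVec_mulVec, mulVec, dotProduct, mul_sum]
    exact sum_congr rfl fun j _ => by ring
  rw [(hsum i).tsum_eq_zero_add, pow_zero, one_mul, pow_zero, one_mulVec, tsum_congr hsucc,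
    Summable.tsum_finsetSum fun j _ => ((hsum j).mul_left _).mul_left _, mulVec, dotProduct,
    mul_sum]
  simp only [tsum_mul_left]

end Stochastic

namespace MDP

noncomputable def saTransition (M : MDP S A) (π : S → A → ℝ) : Matrix (S × A) (S × A) ℝ :=
  fun q p => M.P q.1 q.2 p.1 * π p.1 p.2

def lookahead (M : MDP S A) (V : S → ℝ) (s : S) (a : A) : ℝ :=
  M.r s a + M.γ * ∑ s', M.P s a s' * V s'

variable {M : MDP S A} {π : S → A → ℝ}

lemma saTransition_mem_rowStochastic [DecidableEq S] [DecidableEq A] (hM : IsValidMDP M)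
    (hπ : IsPolicy π) : M.saTransition π ∈ rowStochastic ℝ (S × A) := by
  refine mem_rowStochastic_iff_sum.2 ⟨fun q p => mul_nonneg (hM.1 _ _ _) (hπ.1 _ _), fun q => ?_⟩
  simp only [saTransition, Fintype.sum_prod_type, ← mul_sum, hπ.2, mul_one, hM.2.1]

lemma saDist_eq_vecMul [DecidableEq S] [DecidableEq A] (M : MDP S A) (π : S → A → ℝ)
    (init : S × A → ℝ) (h : ℕ) :
    saDist M π init h = init ᵥ* M.saTransition π ^ h := by
  induction h with
  | zero => rw [pow_zero, vecMul_one]; rfl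
  | succ h ih =>
    ext p
    rw [pow_succ, ← vecMul_vecMul, ← ih]
    exact sum_congr rfl fun q _ => mul_assoc _ _ _

lemma Qf_eq_tsum_mulVec [DecidableEq S] [DecidableEq A] (M : MDP S A) (π : S → A → ℝ)
    (s : S) (a : A) :
    Qf M π s a = ∑' h : ℕ, M.γ ^ h * (M.saTransition π ^ h *ᵥ Function.uncurry M.r) (s, a) := by
  refine tsum_congr fun h => congrArg _ ?_
  change (saDist M π _ h) ⬝ᵥ Function.uncurry M.r = _
  rw [saDist_eq_vecMul, ← dotProduct_mulVec]
  simp [dotProduct]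

lemma Qf_eq_lookahead (hM : IsValidMDP M) (hπ : IsPolicy π) (s : S) (a : A) :
    Qf M π s a = M.lookahead (Vf M π) s a := by
  classical
  have hQ : (fun q : S × A => ∑' h : ℕ,
      M.γ ^ h * (M.saTransition π ^ h *ᵥ Function.uncurry M.r) q) = Function.uncurry (Qf M π) :=
    funext fun q => (Qf_eq_tsum_mulVec M π q.1 q.2).symm
  rw [Qf_eq_tsum_mulVec, tsum_pow_mul_pow_mulVec (saTransition_mem_rowStochastic hM hπ)
    hM.2.2.2.2.1 hM.2.2.2.2.2, hQ]
  simp only [lookahead, Vf, mulVec, dotProduct, saTransition, Fintype.sum_prod_type, mul_sum,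
    mul_assoc, Function.uncurry_apply_pair]

lemma stateDist_nonneg (hM : IsValidMDP M) (hπ : IsPolicy π) (h : ℕ) (s : S) :
    0 ≤ stateDist M π h s := by
  induction h generalizing s with
  | zero => exact hM.2.2.1 s
  | succ h ih =>
    exact sum_nonneg fun s' _ => sum_nonneg fun a _ =>
      mul_nonneg (mul_nonneg (ih s') (hπ.1 s' a)) (hM.1 s' a s)

lemma sum_stateDist_succ_mul (M : MDP S A) (π : S → A → ℝ) (h : ℕ) (V : S → ℝ) :
    ∑ s, stateDist M π (h + 1) s * V s =
      ∑ s, stateDist M π h s * ∑ a, π s a * ∑ s', M.P s a s' * V s' := by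
  simp only [stateDist, sum_mul, mul_sum]
  rw [sum_comm]
  refine sum_congr rfl fun s _ => ?_
  rw [sum_comm]
  exact sum_congr rfl fun a _ => sum_congr rfl fun s' _ => by ring

lemma sum_stateDist (hM : IsValidMDP M) (hπ : IsPolicy π) (h : ℕ) :
    ∑ s, stateDist M π h s = 1 := by
  induction h with
  | zero => exact hM.2.2.2.1
  | succ h ih =>
    simpa only [Pi.one_apply, mul_one, hM.2.1, hπ.2, ih] using sum_stateDist_succ_mul M π h 1

lemma sum_mul_lookahead (M : MDP S A) (μ : A → ℝ) (V : S → ℝ) (s : S) :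
    ∑ a, μ a * M.lookahead V s a =
      ∑ a, μ a * M.r s a + M.γ * ∑ a, μ a * ∑ s', M.P s a s' * V s' := by
  simp only [lookahead, mul_add, sum_add_distrib, mul_sum]
  exact congrArg _ (sum_congr rfl fun a _ => sum_congr rfl fun s' _ => by ring)

lemma tsum_stateDist_mul_sub_lookahead (hM : IsValidMDP M) (hπ : IsPolicy π) (V : S → ℝ) :
    ∑' h : ℕ, M.γ ^ h * ∑ s, stateDist M π h s * (V s - ∑ a, π s a * M.lookahead V s a) =
      ∑ s, M.ρ s * V s - value M π := by
  set W : ℕ → ℝ := fun h => M.γ ^ h * ∑ s, stateDist M π h s * V s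
  set R : ℕ → ℝ := fun h => M.γ ^ h * ∑ s, stateDist M π h s * ∑ a, π s a * M.r s a
  have hη0 := stateDist_nonneg hM hπ
  have hη1 := sum_stateDist hM hπ
  have hW : Summable W := summable_pow_mul_of_abs_le hM.2.2.2.2.1 hM.2.2.2.2.2 fun h =>
    abs_sum_mul_le_of_sum_eq_one (hη0 h) (hη1 h) (norm_le_pi_norm V)
  have hR : Summable R := summable_pow_mul_of_abs_le hM.2.2.2.2.1 hM.2.2.2.2.2 fun h =>
    abs_sum_mul_le_of_sum_eq_one (hη0 h) (hη1 h) fun s =>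
      abs_sum_mul_le_of_sum_eq_one (hπ.1 s) (hπ.2 s) fun a =>
        (norm_le_pi_norm (M.r s) a).trans (norm_le_pi_norm M.r s)
  have hterm (h : ℕ) :
      M.γ ^ h * ∑ s, stateDist M π h s * (V s - ∑ a, π s a * M.lookahead V s a) =
        (W h - W (h + 1)) - R h := by
    rw [show W (h + 1) = _ from congrArg (M.γ ^ (h + 1) * ·) (sum_stateDist_succ_mul M π h V)]
    simp only [W, R, sum_mul_lookahead, mul_sub, mul_add, sum_sub_distrib, sum_add_distrib,
      mul_left_comm _ M.γ, ← mul_sum]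
    ring
  rw [tsum_congr hterm, (hW.hasSum_sub_succ.sub hR.hasSum).tsum_eq]
  simp [W, R, value, stateDist, mul_sum, mul_assoc]

lemma value_eq_sum_mul_Vf (hM : IsValidMDP M) (hπ : IsPolicy π) :
    value M π = ∑ s, M.ρ s * Vf M π s := by
  have hres (s : S) : Vf M π s - ∑ a, π s a * M.lookahead (Vf M π) s a = 0 := by
    simp only [← Qf_eq_lookahead hM hπ, Vf, sub_self]
  have h := tsum_stateDist_mul_sub_lookahead hM hπ (Vf M π)
  simp only [hres, mul_zero, sum_const_zero, tsum_zero] at h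
  linarith

end MDP

theorem performance_difference_general (M : MDP S A) (hM : IsValidMDP M)
    (π π' : S → A → ℝ) (hπ : IsPolicy π) (hπ' : IsPolicy π') :
    value M π' - value M π =
      ∑' h : ℕ, M.γ ^ h * ∑ s : S, stateDist M π h s *
        (Vf M π' s - ∑ a : A, π s a * Qf M π' s a) := by
  simp only [MDP.Qf_eq_lookahead hM hπ', MDP.tsum_stateDist_mul_sub_lookahead hM hπ,
    MDP.value_eq_sum_mul_Vf hM hπ']

/-- **Performance difference lemma.**
`v^{π'} − v^{π} = Σ_{h≥0} γ^h E_{s∼η_h^{π}}[V^{π'}(s) − Σ_a π(a|s) Q^{π'}(s,a)]`. -/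
theorem performance_difference (M : MDP S A) (hM : IsValidMDP M)
    (B : ℝ) (hr : ∀ s a, |M.r s a| ≤ B)
    (π π' : S → A → ℝ) (hπ : IsPolicy π) (hπ' : IsPolicy π') :
    value M π' - value M π =
      ∑' h : ℕ, M.γ ^ h * ∑ s : S, stateDist M π h s *
        (Vf M π' s - ∑ a : A, π s a * Qf M π' s a) :=
  performance_difference_general M hM π π' hπ hπ'
end

section
/- Let π* be a policy on M with Pr(μ(s,a) ≤ 2b | π*) ≤ ε under the discounted state-action occupancy, and suppose all occupancy densities under π* are bounded by U and ‖μ̂ − μ‖_TV ≤ ε_μ. Then with ζ(s,a) = 1(μ̂(s,a) ≥ b), the discounted probability of visiting an unsupported pair satisfies Pr(ζ(s,a) = 0 | π*) ≤ ε + (U/b)·ε_μ. -/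
open scoped BigOperators

/-- If the discounted occupancy `η` of `π*` is bounded by `U`,
`Pr(μ(s,a) ≤ 2b | π*) ≤ ε`, and `‖μ̂ − μ‖_TV ≤ ε_μ`, then with
`ζ(s,a) = 1(μ̂(s,a) ≥ b)` the probability of visiting an unsupported pair is
`Pr(ζ = 0 | π*) ≤ ε + (U/b)·ε_μ`. -/
theorem unsupported_occupancy_le {S A : Type} [Fintype S] [Fintype A]
    (μ μhat η : S × A → ℝ) (U b ε εμ : ℝ)
    (hb : 0 < b) (hU : 0 < U)
    (hμnn : ∀ p, 0 ≤ μ p) (hμ1 : ∑ p : S × A, μ p = 1)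
    (hμhnn : ∀ p, 0 ≤ μhat p) (hμh1 : ∑ p : S × A, μhat p = 1)
    (hηnn : ∀ p, 0 ≤ η p) (hη1 : ∑ p : S × A, η p = 1)
    (hηU : ∀ p, η p ≤ U)
    (hcover : ∑ p : S × A, η p * (if μ p ≤ 2 * b then (1 : ℝ) else 0) ≤ ε)
    (hTV : (1 / 2) * ∑ p : S × A, |μhat p - μ p| ≤ εμ) :
    ∑ p : S × A, η p * (if μhat p < b then (1 : ℝ) else 0) ≤ ε + (U / b) * εμ := by
  have hmaxeq : ∀ x : ℝ, max x 0 = (x + |x|) / 2 := by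
    intro x
    rcases le_total x 0 with h | h
    · rw [max_eq_right h, abs_of_nonpos h]; ring
    · rw [max_eq_left h, abs_of_nonneg h]; ring
  have hsum0 : ∑ p : S × A, (μ p - μhat p) = 0 := by
    rw [Finset.sum_sub_distrib, hμ1, hμh1]; ring
  have hmaxsum : ∑ p : S × A, max (μ p - μhat p) 0
      = (1 / 2) * ∑ p : S × A, |μhat p - μ p| := by
    have : ∑ p : S × A, max (μ p - μhat p) 0
        = ∑ p : S × A, ((μ p - μhat p) + |μ p - μhat p|) / 2 := by
      exact Finset.sum_congr rfl fun p _ => hmaxeq _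
    rw [this, ← Finset.sum_div, Finset.sum_add_distrib, hsum0]
    simp_rw [abs_sub_comm (μ _) (μhat _)]
    ring
  have hpt : ∀ p : S × A, η p * (if μhat p < b then (1 : ℝ) else 0)
      ≤ η p * (if μ p ≤ 2 * b then (1 : ℝ) else 0) + (U / b) * max (μ p - μhat p) 0 := by
    intro p
    by_cases h1 : μhat p < b
    · by_cases h2 : μ p ≤ 2 * b
      · simp only [h1, h2, if_pos]
        have : 0 ≤ (U / b) * max (μ p - μhat p) 0 :=
          mul_nonneg (div_nonneg hU.le hb.le) (le_max_right _ _)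
        linarith
      · simp only [h1, h2, if_pos, if_neg, not_false_iff]
        push_neg at h2
        have hgap : b ≤ μ p - μhat p := by linarith
        have hmax : b ≤ max (μ p - μhat p) 0 := le_trans hgap (le_max_left _ _)
        have : U ≤ (U / b) * max (μ p - μhat p) 0 := by
          rw [div_mul_eq_mul_div, le_div_iff₀ hb]
          calc U * b ≤ U * max (μ p - μhat p) 0 :=
                mul_le_mul_of_nonneg_left hmax hU.le
            _ = U * max (μ p - μhat p) 0 * 1 := by ring
            _ ≤ _ := by nlinarith [hηnn p]
        have h0 : 0 ≤ η p * (if μ p ≤ 2 * b then (1 : ℝ) else 0) :=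
          mul_nonneg (hηnn p) (by positivity)
        have := hηU p
        simp only [mul_one]
        linarith
    · simp only [h1, if_neg, not_false_iff, mul_zero]
      have h0 : 0 ≤ η p * (if μ p ≤ 2 * b then (1 : ℝ) else 0) :=
        mul_nonneg (hηnn p) (by split <;> norm_num)
      have h0' : 0 ≤ (U / b) * max (μ p - μhat p) 0 :=
        mul_nonneg (div_nonneg hU.le hb.le) (le_max_right _ _)
      linarith
  calc ∑ p : S × A, η p * (if μhat p < b then (1 : ℝ) else 0)
      ≤ ∑ p : S × A, (η p * (if μ p ≤ 2 * b then (1 : ℝ) else 0)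
          + (U / b) * max (μ p - μhat p) 0) := Finset.sum_le_sum fun p _ => hpt p
    _ = (∑ p : S × A, η p * (if μ p ≤ 2 * b then (1 : ℝ) else 0))
          + (U / b) * ∑ p : S × A, max (μ p - μhat p) 0 := by
        rw [Finset.sum_add_distrib, Finset.mul_sum]
    _ ≤ ε + (U / b) * εμ := by
        have : (U / b) * ∑ p : S × A, max (μ p - μhat p) 0 ≤ (U / b) * εμ := by
          rw [hmaxsum]
          exact mul_le_mul_of_nonneg_left hTV (div_nonneg hU.le hb.le)
        linarith
end
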